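/- Let s be a square root on an MV-algebra M. For every x ∈ M, x ∨ s(0) ≤ s(x) ≤ x ⊕ s(0). In particular, if x is idempotent then s(x) = x ∨ s(0). -/
import Mathlib


class MVAlg (M : Type*) where
  add : M → M → M
  compl : M → M
  zero : M
  one : M
  add_comm : ∀ x y, add x y = add y x
  add_assoc : ∀ x y z, add (add x y) z = add x (add y z)
  add_zero : ∀ x, add x zero = x
  compl_compl : ∀ x, compl (compl x) = x
  add_one : ∀ x, add x one = one
  chang : ∀ x y, add x (compl (add x (compl y))) = add y (compl (add y (compl x)))
  compl_zero : compl zero = one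

namespace MVAlg

variable {M : Type*} [MVAlg M]

/-- x ⊙ y := (x' ⊕ y')' -/
def odot (x y : M) : M := compl (add (compl x) (compl y))

/-- x ≤ y iff x' ⊕ y = 1 -/
def le (x y : M) : Prop := add (compl x) y = one

/-- x ∧ y := x ⊙ (x' ⊕ y) -/
def inf (x y : M) : M := odot x (add (compl x) y)

/-- x ∨ y := (x ⊙ y') ⊕ y -/
def sup (x y : M) : M := add (odot x (compl y)) y

/-- x ⊖ y := x ⊙ y' -/
def sub (x y : M) : M := odot x (compl y)

/-- A square root on an MV-algebra. -/
def IsSquareRoot (s : M → M) : Prop :=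
  (∀ x : M, odot (s x) (s x) = x) ∧ ∀ x y : M, le (odot y y) x → le y (s x)

end MVAlg

namespace MVAlg

variable {M : Type*} [MVAlg M]

instance (priority := low) : Zero M := ⟨zero⟩
instance (priority := low) : Add M := ⟨add⟩
instance (priority := low) : One M := ⟨one⟩
instance (priority := low) : Mul M := ⟨odot⟩

instance (priority := low) toAddCommMonoid : AddCommMonoid M where
  add := (· + ·)
  zero := (0 : M)
  add_assoc := add_assoc
  zero_add x := (add_comm zero x).trans (add_zero x)
  add_zero := add_zero
  add_comm := add_comm
  nsmul := nsmulRec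
  nsmul_zero _ := rfl
  nsmul_succ _ _ := rfl

lemma add_eq (x y : M) : add x y = x + y := rfl

lemma zero_eq : (zero : M) = 0 := rfl

lemma add_one' (x : M) : x + one = one := add_one x

lemma one_add' (x : M) : one + x = one := by rw [_root_.add_comm]; exact add_one x

lemma compl_one : compl (one : M) = 0 := by
  rw [← compl_zero, compl_compl]; rfl

lemma compl_inj {x y : M} (h : compl x = compl y) : x = y := by
  rw [← compl_compl x, ← compl_compl y, h]

lemma add_compl (x : M) : x + compl x = one := by
  have h := chang x one
  simp only [add_eq, compl_one, _root_.add_zero, one_add'] at h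
  exact h

lemma compl_add_self (x : M) : compl x + x = one := by
  rw [_root_.add_comm]; exact add_compl x

lemma le_def {x y : M} : le x y ↔ compl x + y = one := Iff.rfl

lemma le_refl (x : M) : le x x := compl_add_self x

lemma zero_le (x : M) : le zero x := by
  rw [le_def, compl_zero]; exact one_add' x

lemma le_one (x : M) : le x one := add_one _

lemma compl_le_compl {a b : M} (h : le a b) : le (compl b) (compl a) := by
  rw [le_def, compl_compl, _root_.add_comm]; exact h

lemma le_of_compl_le_compl {a b : M} (h : le (compl b) (compl a)) : le a b := by
  have := compl_le_compl h
  rwa [compl_compl, compl_compl] at this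

lemma sup_comm (x y : M) : sup x y = sup y x := by
  have h := chang y x
  unfold sup odot
  simp only [compl_compl, add_eq] at *
  rw [_root_.add_comm y (compl x), _root_.add_comm x (compl y)] at h
  rw [_root_.add_comm (compl (compl x + y)) y, _root_.add_comm (compl (compl y + x)) x]
  exact h

lemma sup_eq_of_le {a c : M} (h : le a c) : sup a c = c := by
  unfold sup odot
  simp only [compl_compl, add_eq]
  rw [le_def] at h
  rw [h, compl_one]
  exact zero_add c

lemma eq_sup_of_le {a c : M} (h : le a c) : c = odot c (compl a) + a := by
  conv_lhs => rw [← sup_eq_of_le h, sup_comm]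
  rfl

lemma le_add_left (u e : M) : le u (e + u) := by
  rw [le_def, _root_.add_comm e u, ← _root_.add_assoc, compl_add_self, one_add']

lemma add_le_add_right' {a c : M} (h : le a c) (d : M) : le (a + d) (c + d) := by
  have hc := eq_sup_of_le h
  have h1 : le (a + d) (odot c (compl a) + (a + d)) := le_add_left _ _
  have he : odot c (compl a) + (a + d) = c + d := by
    conv_rhs => rw [hc]
    abel
  rwa [he] at h1

lemma le_trans' {a b c : M} (h1 : le a b) (h2 : le b c) : le a c := by
  rw [le_def] at *
  have hc := eq_sup_of_le h2
  calc compl a + c = odot c (compl b) + (compl a + b) := by conv_lhs => rw [hc]; rw [show compl a + (odot c (compl b) + b) = odot c (compl b) + (compl a + b) from by abel]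
    _ = one := by rw [h1, add_one']

lemma le_antisymm' {a b : M} (h1 : le a b) (h2 : le b a) : a = b := by
  have e1 : sup a b = b := sup_eq_of_le h1
  have e2 : sup b a = a := sup_eq_of_le h2
  rw [← e2, sup_comm, e1]

lemma odot_comm (a b : M) : odot a b = odot b a := by
  unfold odot; rw [add_comm]

lemma odot_assoc (a b c : M) : odot (odot a b) c = odot a (odot b c) := by
  unfold odot; simp only [compl_compl]; rw [add_assoc]

lemma odot_one (a : M) : odot a one = a := by
  unfold odot
  rw [compl_one, zero_eq.symm, add_zero, compl_compl]

lemma one_odot (a : M) : odot one a = a := by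
  rw [odot_comm]; exact odot_one a

instance (priority := low) toCommMonoid : CommMonoid M where
  mul := (· * ·)
  one := (1 : M)
  mul_assoc := odot_assoc
  one_mul := one_odot
  mul_one := odot_one
  mul_comm := odot_comm
  npow := npowRec
  npow_zero _ := rfl
  npow_succ _ _ := rfl

lemma odot_eq (a b : M) : odot a b = a * b := rfl

lemma odot_le_left (a b : M) : le (odot a b) a := by
  rw [le_def]
  unfold odot
  simp only [compl_compl, add_eq]
  rw [show compl a + compl b + a = compl b + (compl a + a) from by abel,
    compl_add_self, add_one']

lemma odot_le_odot_right {a c : M} (h : le a c) (d : M) : le (odot a d) (odot c d) := by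
  unfold odot
  apply compl_le_compl
  exact add_le_add_right' (compl_le_compl h) (compl d)

lemma odot_le_odot_left {a c : M} (h : le a c) (d : M) : le (odot d a) (odot d c) := by
  rw [odot_comm d a, odot_comm d c]; exact odot_le_odot_right h d

lemma sup_le' {a b c : M} (h1 : le a c) (h2 : le b c) : le (sup a b) c := by
  have k1 : le (sup a b) (sup c b) :=
    add_le_add_right' (odot_le_odot_right h1 (compl b)) b
  have k2 : sup c b = c := by rw [sup_comm]; exact sup_eq_of_le h2
  rwa [k2] at k1

lemma residuation {a b c : M} : le (odot a (compl b)) c ↔ le a (add b c) := by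
  unfold le odot
  simp only [compl_compl, add_eq]
  rw [_root_.add_assoc]

lemma zero_odot (a : M) : odot zero a = zero := by
  unfold odot
  simp only [add_eq, compl_zero, one_add', compl_one]
  rfl

lemma odot_compl_self (a : M) : odot a (compl a) = zero := by
  unfold odot
  simp only [compl_compl, add_eq, compl_add_self, compl_one]
  rfl

lemma inf_comm (a b : M) : inf a b = inf b a := by
  unfold inf odot
  apply compl_inj
  simp only [compl_compl]
  have h := chang (compl a) (compl b)
  rwa [compl_compl, compl_compl] at h

lemma inf_le_right (a b : M) : le (inf a b) b := by
  rw [inf_comm]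
  exact odot_le_left b _

lemma idem_inf_le_odot {f : M} (hf : odot f f = f) (z : M) : le (inf f z) (odot f z) := by
  have h1 : inf f z = odot f (inf f z) := by
    show odot f (add (compl f) z) = odot f (odot f (add (compl f) z))
    rw [← odot_assoc, hf]
  rw [h1]
  exact odot_le_odot_left (inf_le_right f z) f

/-- For an idempotent element, x ⊕ y ≤ x ∨ y. -/
lemma bool_add_le_sup {x : M} (hx : add x x = x) (y : M) : le (add x y) (sup x y) := by
  have hf : odot (compl x) (compl x) = compl x := by
    unfold odot
    simp only [compl_compl]
    rw [hx]
  apply le_of_compl_le_compl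
  have e2 : compl (add x y) = odot (compl x) (compl y) := by
    unfold odot; simp only [compl_compl]
  have e1 : compl (sup x y) = inf (compl y) (compl x) := by
    unfold sup inf odot
    simp only [compl_compl]
    congr 1
    rw [add_comm (compl (add (compl x) y)) y, add_comm (compl x) y]
  rw [e1, e2, inf_comm]
  exact idem_inf_le_odot hf (compl y)

theorem main (s : M → M) (hs : IsSquareRoot s) (x : M) :
    le (sup x (s zero)) (s x) ∧
    le (s x) (add x (s zero)) ∧
    (add x x = x → s x = sup x (s zero)) := by
  obtain ⟨hsq, hmin⟩ := hs
  have hxle : le x (s x) := hmin x x (odot_le_left x x)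
  have hs0le : le (s zero) (s x) := hmin x (s zero) (by rw [hsq zero]; exact zero_le x)
  have g1 : le (sup x (s zero)) (s x) := sup_le' hxle hs0le
  have huu : odot (odot (s x) (compl x)) (odot (s x) (compl x)) = zero := by
    simp only [odot_eq]
    rw [mul_mul_mul_comm, ← odot_eq (s x) (s x), hsq x, ← mul_assoc,
      ← odot_eq x (compl x), odot_compl_self, ← odot_eq, zero_odot]
  have hu : le (odot (s x) (compl x)) (s zero) :=
    hmin zero _ (by rw [huu]; exact le_refl zero)
  have g2 : le (s x) (add x (s zero)) := residuation.mp hu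
  refine ⟨g1, g2, fun hidem => ?_⟩
  have h3 : le (add x (s zero)) (sup x (s zero)) := bool_add_le_sup hidem (s zero)
  exact le_antisymm' (le_trans' g2 h3) g1

end MVAlg

theorem square_root_bounds {M : Type*} [MVAlg M] (s : M → M)
    (hs : MVAlg.IsSquareRoot s) (x : M) :
    MVAlg.le (MVAlg.sup x (s MVAlg.zero)) (s x) ∧
    MVAlg.le (s x) (MVAlg.add x (s MVAlg.zero)) ∧
    (MVAlg.add x x = x → s x = MVAlg.sup x (s MVAlg.zero)) := MVAlg.main s hs x
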